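/- Equivalence of the additive IPW weight and the per-cluster least-squares form (derivation of Equation (5) from Equation (11)). For every m ∈ ℕ, every e ∈ (0,1)^m, and all a, p ∈ {0,1}^m, writing φ(a) = (1, a_1, …, a_m) ∈ ℝ^{m+1}, one has φ(p)^T T(e) φ(a) = W(a, p, e). -/

import Mathlib

open Finset

/-- For `e ∈ (0,1)` and a binary value `a`, `eOf e a = e` if `a = 1` (`true`) and
`eOf e a = 1 − e` if `a = 0` (`false`). -/
noncomputable def eOf (e : ℝ) (a : Bool) : ℝ := if a then e else 1 - e

/-- The additive IPW weight `W(a, p, e) = Σ_j (1{a_j = p_j}/e_j(p_j) − 1) + 1`. -/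
noncomputable def addW (m : ℕ) (a p : Fin m → Bool) (e : Fin m → ℝ) : ℝ :=
  (∑ j : Fin m, ((if a j = p j then (1 : ℝ) else 0) / eOf (e j) (p j) - 1)) + 1

/-- The explicit matrix `T(e)` of Equation (9), indexed by `Option (Fin m)` where `none`
is the intercept coordinate `0` and `some j` is coordinate `j`. -/
noncomputable def TMat (m : ℕ) (e : Fin m → ℝ) :
    Matrix (Option (Fin m)) (Option (Fin m)) ℝ :=
  Matrix.of fun i j =>
    match i, j with
    | none, none => 1 + ∑ k : Fin m, e k / (1 - e k)
    | none, some k => -(1 / (1 - e k))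
    | some j', none => -(1 / (1 - e j'))
    | some j', some k => if j' = k then 1 / (e j' * (1 - e j')) else 0

/-- The feature vector `φ(a) = (1, a₁, …, a_m) ∈ ℝ^{m+1}`. -/
noncomputable def phiVec (m : ℕ) (a : Fin m → Bool) : Option (Fin m) → ℝ :=
  fun i => match i with
  | none => 1
  | some j => if a j then 1 else 0

/-!
Besides the intercept entry `1`, the matrix `T(e)` is a sum over `j` of the `2 × 2` blocks
`[[e/(1-e), -1/(1-e)], [-1/(1-e), 1/(e(1-e))]]` on the coordinates `(0, j)`. Hence the form
`φ(p)ᵀ T(e) φ(a)` is `1` plus a sum of per-coordinate terms, and each of these equals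
`1{a_j = p_j}/e_j(p_j) − 1` by a check of the four values of `(a_j, p_j)`.
-/

lemma ite_div_eOf_sub_one_eq {e : ℝ} (he₀ : e ≠ 0) (he₁ : 1 - e ≠ 0) (a p : Bool) :
    (if a = p then (1 : ℝ) else 0) / eOf e p - 1
      = e / (1 - e) - (if a then 1 else 0) / (1 - e) - (if p then 1 else 0) / (1 - e)
        + (if p then 1 else 0) * (if a then 1 else 0) / (e * (1 - e)) := by
  cases a <;> cases p <;> simp [eOf] <;> field_simp <;> ring

lemma phiVec_TMat_phiVec_eq_one_add_sum (m : ℕ) (e : Fin m → ℝ) (a p : Fin m → Bool) :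
    ∑ i : Option (Fin m), ∑ k : Option (Fin m), phiVec m p i * TMat m e i k * phiVec m a k
      = 1 + ∑ j : Fin m, (e j / (1 - e j) - (if a j then 1 else 0) / (1 - e j)
          - (if p j then 1 else 0) / (1 - e j)
          + (if p j then 1 else 0) * (if a j then 1 else 0) / (e j * (1 - e j))) := by
  simp only [Fintype.sum_option, phiVec, TMat, Matrix.of_apply]
  have diag : ∀ j : Fin m, ∑ k : Fin m, (if p j then (1 : ℝ) else 0)
      * (if j = k then 1 / (e j * (1 - e j)) else 0) * (if a k then 1 else 0)
      = (if p j then 1 else 0) * (if a j then 1 else 0) / (e j * (1 - e j)) := fun j => by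
    rw [Finset.sum_eq_single_of_mem j (Finset.mem_univ j) fun k _ hk => by simp [Ne.symm hk]]
    simp only [if_true]
    ring
  simp only [diag, one_mul, mul_one, add_assoc, ← Finset.sum_add_distrib]
  exact congrArg (1 + ·) (Finset.sum_congr rfl fun j _ => by ring)

/-- **Equivalence of the additive IPW weight and the per-cluster least-squares form
(derivation of Equation (5) from Equation (11)).**  For all `m`, `e ∈ (0,1)^m` and
`a, p ∈ {0,1}^m`, one has `φ(p)ᵀ T(e) φ(a) = W(a, p, e)`. -/
theorem phi_T_phi_eq_addW
    (m : ℕ) (e : Fin m → ℝ) (he : ∀ j, 0 < e j ∧ e j < 1)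
    (a p : Fin m → Bool) :
    ∑ i : Option (Fin m), ∑ k : Option (Fin m),
        phiVec m p i * TMat m e i k * phiVec m a k
      = addW m a p e := by
  rw [phiVec_TMat_phiVec_eq_one_add_sum, addW, add_comm]
  congr 1
  refine Finset.sum_congr rfl fun j _ => ?_
  obtain ⟨he₀, he₁⟩ := he j
  exact (ite_div_eOf_sub_one_eq he₀.ne' (sub_ne_zero.2 he₁.ne') (a j) (p j)).symm
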